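/- Let 1 < p < 5, α > 0, β > 0 and γ, μ, s > 0. Then the infimum I(γ, μ, s) is finite and strictly negative: −∞ < I(γ, μ, s) < 0. -/

import Mathlib

open MeasureTheory Filter Complex

noncomputable section

/-- Membership in `H¹(ℝ, ℂ)` (modeled via the classical derivative). -/
def InH1 (f : ℝ → ℂ) : Prop :=
  MemLp f 2 (volume : Measure ℝ) ∧ Differentiable ℝ f ∧
    MemLp (deriv f) 2 (volume : Measure ℝ)

/-- `‖f‖_{L²}²`. -/
def massSq (f : ℝ → ℂ) : ℝ := ∫ x : ℝ, ‖f x‖ ^ 2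

/-- `‖∂ₓ f‖_{L²}²`. -/
def kinetic (f : ℝ → ℂ) : ℝ := ∫ x : ℝ, ‖deriv f x‖ ^ 2

/-- `∫ |f|^{p+1}`. -/
def potential (p : ℝ) (f : ℝ → ℂ) : ℝ := ∫ x : ℝ, ‖f x‖ ^ (p + 1)

/-- `Re ∫ u₁ u₂ (conj u₃)`. -/
def interaction (u1 u2 u3 : ℝ → ℂ) : ℝ :=
  ∫ x : ℝ, (u1 x * u2 x * (starRingEnd ℂ) (u3 x)).re

/-- The energy functional `E`. -/
def energy (p α β : ℝ) (u1 u2 u3 : ℝ → ℂ) : ℝ :=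
  ((1 / 2) * kinetic u1 - β / (p + 1) * potential p u1)
    + ((1 / 2) * kinetic u2 - β / (p + 1) * potential p u2)
    + ((1 / 2) * kinetic u3 - β / (p + 1) * potential p u3)
    - α * interaction u1 u2 u3

/-- The set of energies of admissible triples for `I(γ, μ, s)`. -/
def constraintSet (p α β γ μ s : ℝ) : Set ℝ :=
  { e | ∃ u1 u2 u3 : ℝ → ℂ, InH1 u1 ∧ InH1 u2 ∧ InH1 u3 ∧
      massSq u1 = γ ∧ massSq u2 = μ ∧ massSq u3 = s ∧ e = energy p α β u1 u2 u3 }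

/-- `I(γ, μ, s)`. -/
def Iinf (p α β γ μ s : ℝ) : ℝ := sInf (constraintSet p α β γ μ s)

/-- A minimizing sequence for `I(γ, μ, s)`. -/
def MinimizingSeq (p α β γ μ s : ℝ) (u1 u2 u3 : ℕ → ℝ → ℂ) : Prop :=
  (∀ n, InH1 (u1 n) ∧ InH1 (u2 n) ∧ InH1 (u3 n)) ∧
  Tendsto (fun n => massSq (u1 n)) atTop (nhds γ) ∧
  Tendsto (fun n => massSq (u2 n)) atTop (nhds μ) ∧
  Tendsto (fun n => massSq (u3 n)) atTop (nhds s) ∧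
  Tendsto (fun n => energy p α β (u1 n) (u2 n) (u3 n)) atTop
    (nhds (Iinf p α β γ μ s))

/-- `∫_{y-r}^{y+r} (|u₁|² + |u₂|² + |u₃|²)`. -/
def localMass (u1 u2 u3 : ℝ → ℂ) (y r : ℝ) : ℝ :=
  ∫ x in Set.Icc (y - r) (y + r), (‖u1 x‖ ^ 2 + ‖u2 x‖ ^ 2 + ‖u3 x‖ ^ 2)

/-- `λ` is the concentration parameter of the sequence. -/
def IsConcentration (u1 u2 u3 : ℕ → ℝ → ℂ) (lam : ℝ) : Prop :=
  Tendsto (fun r : ℝ =>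
      limsup (fun n => ⨆ y : ℝ, localMass (u1 n) (u2 n) (u3 n) y r) atTop)
    atTop (nhds lam)

/-- The squared `H¹` norm. -/
def H1normSq (f : ℝ → ℂ) : ℝ := massSq f + kinetic f

/-- The `H¹(ℝ; ℂ³)` distance between two triples. -/
def H1dist3 (u v : (ℝ → ℂ) × (ℝ → ℂ) × (ℝ → ℂ)) : ℝ :=
  Real.sqrt (H1normSq (u.1 - v.1) + H1normSq (u.2.1 - v.2.1)
    + H1normSq (u.2.2 - v.2.2))

/-- The set `𝒢_{γ,μ,s}` of minimizers of `I(γ, μ, s)`. -/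
def GSet (p α β γ μ s : ℝ) : Set ((ℝ → ℂ) × (ℝ → ℂ) × (ℝ → ℂ)) :=
  { u | InH1 u.1 ∧ InH1 u.2.1 ∧ InH1 u.2.2 ∧
      massSq u.1 = γ ∧ massSq u.2.1 = μ ∧ massSq u.2.2 = s ∧
      energy p α β u.1 u.2.1 u.2.2 = Iinf p α β γ μ s }

/-- Symmetric decreasing rearrangement of a real function:
`f*(x) = |{t > 0 : x ∈ I_t}|` where `I_t` is the open interval centered at `0`
of length `|{ z : |f z| > t }|`. -/
def symmRearr (f : ℝ → ℝ) (x : ℝ) : ℝ :=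
  (volume { t : ℝ | 0 < t ∧
      ENNReal.ofReal (2 * |x|) < volume { z : ℝ | t < |f z| } }).toReal

/-- The constraint set for `J(γ, μ)` (with `Q₁(u) = γ`, `Q₂(u) = μ`). -/
def JconstraintSet (p α β γ μ : ℝ) : Set ℝ :=
  { e | ∃ u1 u2 u3 : ℝ → ℂ, InH1 u1 ∧ InH1 u2 ∧ InH1 u3 ∧
      massSq u1 + massSq u3 = γ ∧ massSq u2 + massSq u3 = μ ∧
      e = energy p α β u1 u2 u3 }

/-- `J(γ, μ)`. -/
def Jinf (p α β γ μ : ℝ) : ℝ := sInf (JconstraintSet p α β γ μ)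

/-- A minimizing sequence for `J(γ, μ)`. -/
def JMinimizingSeq (p α β γ μ : ℝ) (u1 u2 u3 : ℕ → ℝ → ℂ) : Prop :=
  (∀ n, InH1 (u1 n) ∧ InH1 (u2 n) ∧ InH1 (u3 n)) ∧
  Tendsto (fun n => massSq (u1 n) + massSq (u3 n)) atTop (nhds γ) ∧
  Tendsto (fun n => massSq (u2 n) + massSq (u3 n)) atTop (nhds μ) ∧
  Tendsto (fun n => energy p α β (u1 n) (u2 n) (u3 n)) atTop
    (nhds (Jinf p α β γ μ))

/-- The set `ℳ_{γ,μ}` of minimizers of `J(γ, μ)`. -/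
def MSet (p α β γ μ : ℝ) : Set ((ℝ → ℂ) × (ℝ → ℂ) × (ℝ → ℂ)) :=
  { u | InH1 u.1 ∧ InH1 u.2.1 ∧ InH1 u.2.2 ∧
      massSq u.1 + massSq u.2.2 = γ ∧ massSq u.2.1 + massSq u.2.2 = μ ∧
      energy p α β u.1 u.2.1 u.2.2 = Jinf p α β γ μ }

end

/-!
Lower bound: in one dimension `‖f‖²_∞ ≤ 2 ‖f‖₂ ‖f'‖₂`. At fixed masses this bounds
`∫ |u_i|^{p+1}` by a multiple of `‖u_i'‖₂^{(p-1)/2}` and the cubic interaction by a multiple of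
`‖u₁'‖₂^{1/2}`; since `(p-1)/2 < 2` exactly when `p < 5`, both are absorbed by the kinetic
energy, and `E` is bounded below on the constraint set.

Upper bound: the dilation `√θ u(θx)` preserves masses and scales the kinetic energy by `θ²`,
the potential energy by `θ^{(p-1)/2}` and the interaction by `θ^{1/2}`. For Gaussian profiles
with the prescribed masses the interaction is nonnegative, so their energy after dilation is at
most `A θ² - B θ^{(p-1)/2}` with `B > 0`, which is negative for small `θ`.
-/

open Real Topology

section PointwiseBound

variable {f g : ℝ → ℂ}

lemma kinetic_nonneg (f : ℝ → ℂ) : 0 ≤ kinetic f :=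
  integral_nonneg fun _ => by positivity

lemma integrable_norm_mul_norm (hf : MemLp f 2) (hg : MemLp g 2) :
    Integrable fun x => ‖f x‖ * ‖g x‖ :=
  hf.norm.integrable_mul hg.norm

lemma integral_norm_mul_norm_le (hf : MemLp f 2) (hg : MemLp g 2) :
    ∫ x, ‖f x‖ * ‖g x‖ ≤ √(massSq f) * √(massSq g) := by
  have h := integral_mul_le_Lp_mul_Lq_of_nonneg Real.HolderConjugate.two_two
    (ae_of_all _ fun x => norm_nonneg (f x)) (ae_of_all _ fun x => norm_nonneg (g x))
    (by simpa using hf.norm) (by simpa using hg.norm)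
  simpa only [massSq, Real.rpow_two, Real.sqrt_eq_rpow] using h

lemma exists_le_norm_lt_of_integrable {h : ℝ → ℝ} (hh : Integrable h) {ε : ℝ} (hε : 0 < ε)
    (x : ℝ) : ∃ y ≤ x, ‖h y‖ < ε := by
  by_contra! hge
  have hsub : Set.Iic x ⊆ {y | ε ≤ ‖h y‖} := fun y hy => hge y hy
  have := (measure_mono hsub).trans_lt (hh.measure_norm_ge_lt_top hε)
  simp at this

lemma sq_norm_sub_sq_norm_le (hf : InH1 f) {x y : ℝ} (hyx : y ≤ x) :
    ‖f x‖ ^ 2 - ‖f y‖ ^ 2 ≤ 2 * ∫ t, ‖f t‖ * ‖deriv f t‖ := by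
  obtain ⟨hf2, hfd, hfd2⟩ := hf
  set D : ℝ → ℝ := fun t => 2 * inner ℝ (f t) (deriv f t)
  have hG := (integrable_norm_mul_norm hf2 hfd2).const_mul 2
  have hD_le : ∀ t, ‖D t‖ ≤ 2 * (‖f t‖ * ‖deriv f t‖) := fun t => by
    simpa [D, abs_mul] using mul_le_mul_of_nonneg_left (abs_real_inner_le_norm (f t) (deriv f t))
      zero_le_two
  have hD : Integrable D :=
    hG.mono' ((hf2.1.inner (measurable_deriv f).aestronglyMeasurable).const_mul 2)
      (ae_of_all _ hD_le)
  calc ‖f x‖ ^ 2 - ‖f y‖ ^ 2 = ∫ t in y..x, D t :=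
        (intervalIntegral.integral_eq_sub_of_hasDerivAt
          (fun t _ => (hfd t).hasDerivAt.norm_sq) hD.intervalIntegrable).symm
    _ ≤ ∫ t in y..x, 2 * (‖f t‖ * ‖deriv f t‖) :=
        intervalIntegral.integral_mono_on hyx hD.intervalIntegrable hG.intervalIntegrable
          fun t _ => (le_abs_self _).trans (hD_le t)
    _ ≤ ∫ t, 2 * (‖f t‖ * ‖deriv f t‖) := by
        rw [intervalIntegral.integral_of_le hyx]
        exact setIntegral_le_integral hG (ae_of_all _ fun t => by positivity)
    _ = 2 * ∫ t, ‖f t‖ * ‖deriv f t‖ := integral_const_mul _ _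

lemma sq_norm_le_of_inH1 (hf : InH1 f) (x : ℝ) :
    ‖f x‖ ^ 2 ≤ 2 * (√(massSq f) * √(kinetic f)) := by
  refine le_of_forall_pos_lt_add fun ε hε => ?_
  obtain ⟨y, hyx, hy⟩ := exists_le_norm_lt_of_integrable
    ((memLp_two_iff_integrable_sq_norm hf.1.1).mp hf.1) hε x
  have hCS := integral_norm_mul_norm_le hf.1 hf.2.2
  have := sq_norm_sub_sq_norm_le hf hyx
  rw [Real.norm_of_nonneg (by positivity)] at hy
  unfold massSq kinetic at *
  linarith

end PointwiseBound

section LowerBound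

variable {f u1 u2 u3 : ℝ → ℂ}

lemma potential_le_of_sq_norm_le {p S : ℝ} (hp : 1 ≤ p) (hf : MemLp f 2)
    (hS : ∀ x, ‖f x‖ ^ 2 ≤ S) : potential p f ≤ S ^ ((p - 1) / 2) * massSq f := by
  have hf2 := (memLp_two_iff_integrable_sq_norm hf.1).mp hf
  have hpt : ∀ x, ‖f x‖ ^ (p + 1) ≤ S ^ ((p - 1) / 2) * ‖f x‖ ^ 2 := fun x => by
    have hsplit : ‖f x‖ ^ (p + 1) = (‖f x‖ ^ 2) ^ ((p - 1) / 2) * ‖f x‖ ^ 2 := by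
      rw [← Real.rpow_natCast, ← Real.rpow_mul (norm_nonneg _),
        ← Real.rpow_add' (norm_nonneg _) (by push_cast; linarith : (0 : ℝ) < _).ne']
      push_cast
      ring_nf
    rw [hsplit]
    gcongr
    exact hS x
  calc potential p f ≤ ∫ x, S ^ ((p - 1) / 2) * ‖f x‖ ^ 2 :=
        integral_mono_of_nonneg (ae_of_all _ fun x => by positivity) (hf2.const_mul _)
          (ae_of_all _ hpt)
    _ = S ^ ((p - 1) / 2) * massSq f := integral_const_mul _ _

lemma abs_interaction_le_of_norm_le {M : ℝ} (hM : ∀ x, ‖u1 x‖ ≤ M) (h2 : MemLp u2 2)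
    (h3 : MemLp u3 2) : |interaction u1 u2 u3| ≤ M * (√(massSq u2) * √(massSq u3)) := by
  have hpt : ∀ x, ‖(u1 x * u2 x * (starRingEnd ℂ) (u3 x)).re‖ ≤ M * (‖u2 x‖ * ‖u3 x‖) :=
    fun x => calc
      _ ≤ ‖u1 x * u2 x * (starRingEnd ℂ) (u3 x)‖ := Complex.abs_re_le_norm _
      _ = ‖u1 x‖ * (‖u2 x‖ * ‖u3 x‖) := by rw [norm_mul, norm_mul, RCLike.norm_conj, mul_assoc]
      _ ≤ M * (‖u2 x‖ * ‖u3 x‖) := by gcongr; exact hM x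
  calc |interaction u1 u2 u3| ≤ ∫ x, M * (‖u2 x‖ * ‖u3 x‖) :=
        norm_integral_le_of_norm_le ((integrable_norm_mul_norm h2 h3).const_mul M)
          (ae_of_all _ hpt)
    _ = M * ∫ x, ‖u2 x‖ * ‖u3 x‖ := integral_const_mul _ _
    _ ≤ M * (√(massSq u2) * √(massSq u3)) :=
        mul_le_mul_of_nonneg_left (integral_norm_mul_norm_le h2 h3)
          ((norm_nonneg _).trans (hM 0))

lemma exists_mul_rpow_le_mul_sq_add {b C ε : ℝ} (hb0 : 0 ≤ b) (hb : b < 2) (hε : 0 < ε) :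
    ∃ D, ∀ t, 0 ≤ t → C * t ^ b ≤ ε * t ^ 2 + D := by
  obtain ⟨T, hT⟩ := eventually_atTop.mp <|
    ((tendsto_rpow_neg_atTop (by linarith : 0 < 2 - b)).const_mul C).eventually
      (gt_mem_nhds (show C * 0 < ε by simpa using hε))
  set M := max T 1
  refine ⟨|C| * M ^ b, fun t ht => ?_⟩
  rcases le_or_gt t M with htM | htM
  · calc C * t ^ b ≤ |C| * t ^ b := by gcongr; exact le_abs_self C
      _ ≤ |C| * M ^ b := by gcongr
      _ ≤ ε * t ^ 2 + |C| * M ^ b := by nlinarith [sq_nonneg t]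
  · have ht0 : 0 < t := (zero_lt_one.trans_le (le_max_right T 1)).trans htM
    have hsplit : t ^ b = t ^ (-(2 - b)) * t ^ 2 := by
      rw [← Real.rpow_natCast, ← Real.rpow_add ht0]; norm_num
    have hsmall := (hT t ((le_max_left T 1).trans htM.le)).le
    have hD : 0 ≤ |C| * M ^ b := by positivity
    rw [hsplit, ← mul_assoc]
    nlinarith [mul_le_mul_of_nonneg_right hsmall (sq_nonneg t)]

lemma exists_potential_le_kinetic_add {p β : ℝ} (hp : 1 ≤ p) (hp5 : p < 5) (hβ : 0 ≤ β)
    (m : ℝ) : ∃ D, ∀ f, InH1 f → massSq f = m →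
      β / (p + 1) * potential p f ≤ 1 / 4 * kinetic f + D := by
  obtain ⟨D, hD⟩ := exists_mul_rpow_le_mul_sq_add
    (C := β / (p + 1) * ((2 * √m) ^ ((p - 1) / 2) * m)) (by linarith : 0 ≤ (p - 1) / 2)
    (by linarith) (by norm_num : (0 : ℝ) < 1 / 4)
  refine ⟨D, fun f hf hm => ?_⟩
  have hpot := potential_le_of_sq_norm_le hp hf.1 (sq_norm_le_of_inH1 hf)
  rw [hm, ← mul_assoc, Real.mul_rpow (by positivity) (by positivity)] at hpot
  have := hD (√(kinetic f)) (Real.sqrt_nonneg _)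
  rw [Real.sq_sqrt (kinetic_nonneg f)] at this
  calc β / (p + 1) * potential p f
      ≤ β / (p + 1) * ((2 * √m) ^ ((p - 1) / 2) * √(kinetic f) ^ ((p - 1) / 2) * m) := by
        gcongr
    _ ≤ 1 / 4 * kinetic f + D := by linarith

lemma exists_abs_interaction_le_kinetic_add (α m1 m2 m3 : ℝ) :
    ∃ D, ∀ u1 u2 u3, InH1 u1 → InH1 u2 → InH1 u3 →
      massSq u1 = m1 → massSq u2 = m2 → massSq u3 = m3 →
      |α * interaction u1 u2 u3| ≤ 1 / 4 * kinetic u1 + D := by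
  obtain ⟨D, hD⟩ := exists_mul_rpow_le_mul_sq_add
    (C := |α| * (√(2 * √m1) * (√m2 * √m3))) (b := 1 / 2) (by norm_num) (by norm_num)
    (by norm_num : (0 : ℝ) < 1 / 4)
  refine ⟨D, fun u1 u2 u3 h1 h2 h3 hm1 hm2 hm3 => ?_⟩
  have hsup : ∀ x, ‖u1 x‖ ≤ √(2 * √m1) * √(kinetic u1) ^ (1 / 2 : ℝ) := fun x => by
    rw [← Real.sqrt_eq_rpow, ← Real.sqrt_mul (by positivity), ← hm1, mul_assoc]
    exact Real.le_sqrt_of_sq_le (sq_norm_le_of_inH1 h1 x)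
  have hint := abs_interaction_le_of_norm_le hsup h2.1 h3.1
  have := hD (√(kinetic u1)) (Real.sqrt_nonneg _)
  rw [Real.sq_sqrt (kinetic_nonneg u1)] at this
  rw [hm2, hm3] at hint
  calc |α * interaction u1 u2 u3| = |α| * |interaction u1 u2 u3| := abs_mul _ _
    _ ≤ |α| * (√(2 * √m1) * √(kinetic u1) ^ (1 / 2 : ℝ) * (√m2 * √m3)) := by gcongr
    _ ≤ 1 / 4 * kinetic u1 + D := by linarith

lemma bddBelow_constraintSet {p β : ℝ} (hp : 1 ≤ p) (hp5 : p < 5) (hβ : 0 ≤ β)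
    (α γ μ s : ℝ) : BddBelow (constraintSet p α β γ μ s) := by
  obtain ⟨D1, hD1⟩ := exists_potential_le_kinetic_add hp hp5 hβ γ
  obtain ⟨D2, hD2⟩ := exists_potential_le_kinetic_add hp hp5 hβ μ
  obtain ⟨D3, hD3⟩ := exists_potential_le_kinetic_add hp hp5 hβ s
  obtain ⟨D0, hD0⟩ := exists_abs_interaction_le_kinetic_add α γ μ s
  refine ⟨-(D0 + D1 + D2 + D3), ?_⟩
  rintro _ ⟨u1, u2, u3, h1, h2, h3, hm1, hm2, hm3, rfl⟩
  have := hD0 u1 u2 u3 h1 h2 h3 hm1 hm2 hm3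
  have := hD1 u1 h1 hm1
  have := hD2 u2 h2 hm2
  have := hD3 u3 h3 hm3
  have := le_abs_self (α * interaction u1 u2 u3)
  have := kinetic_nonneg u2
  have := kinetic_nonneg u3
  unfold energy
  linarith

end LowerBound

section Dilation

noncomputable def dilate (θ : ℝ) (f : ℝ → ℂ) : ℝ → ℂ := fun x => (√θ : ℂ) * f (θ * x)

variable {θ : ℝ} {f : ℝ → ℂ}

lemma integral_comp_mul_left_of_pos (g : ℝ → ℝ) (hθ : 0 < θ) :
    ∫ x, g (θ * x) = θ⁻¹ * ∫ x, g x := by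
  rw [Measure.integral_comp_mul_left, abs_of_pos (inv_pos.mpr hθ), smul_eq_mul]

lemma memLp_two_comp_mul_left {g : ℝ → ℂ} (hg : MemLp g 2) (hθ : θ ≠ 0) :
    MemLp (fun x => g (θ * x)) 2 := by
  have hmeas : AEStronglyMeasurable (fun x => g (θ * x)) :=
    hg.1.comp_quasiMeasurePreserving (Measure.quasiMeasurePreserving_smul volume hθ)
  exact (memLp_two_iff_integrable_sq_norm hmeas).mpr
    (((memLp_two_iff_integrable_sq_norm hg.1).mp hg).comp_mul_left' hθ)

lemma deriv_dilate (θ : ℝ) (f : ℝ → ℂ) (x : ℝ) :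
    deriv (dilate θ f) x = (√θ : ℂ) * θ * deriv f (θ * x) := by
  unfold dilate
  rw [deriv_const_mul_field, deriv_comp_mul_left, real_smul, mul_assoc]

lemma inH1_dilate (hθ : θ ≠ 0) (hf : InH1 f) : InH1 (dilate θ f) := by
  obtain ⟨hf2, hfd, hfd2⟩ := hf
  refine ⟨(memLp_two_comp_mul_left hf2 hθ).const_mul _, fun x => ?_, ?_⟩
  · exact ((hfd _).comp x ((differentiableAt_id).const_mul θ)).const_mul _
  · rw [funext (deriv_dilate θ f)]
    exact (memLp_two_comp_mul_left hfd2 hθ).const_mul _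

lemma massSq_dilate (hθ : 0 < θ) (f : ℝ → ℂ) : massSq (dilate θ f) = massSq f := by
  have hpt : ∀ x, ‖dilate θ f x‖ ^ 2 = θ * ‖f (θ * x)‖ ^ 2 := fun x => by
    rw [dilate, norm_mul, Complex.norm_real, Real.norm_of_nonneg (Real.sqrt_nonneg θ), mul_pow,
      Real.sq_sqrt hθ.le]
  simp only [massSq, hpt, integral_const_mul,
    integral_comp_mul_left_of_pos (fun y => ‖f y‖ ^ 2) hθ]
  field_simp

lemma kinetic_dilate (hθ : 0 < θ) (f : ℝ → ℂ) : kinetic (dilate θ f) = θ ^ 2 * kinetic f := by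
  have hpt : ∀ x, ‖deriv (dilate θ f) x‖ ^ 2 = θ ^ 3 * ‖deriv f (θ * x)‖ ^ 2 := fun x => by
    rw [deriv_dilate, norm_mul, norm_mul, Complex.norm_real, Complex.norm_real,
      Real.norm_of_nonneg (Real.sqrt_nonneg θ), Real.norm_of_nonneg hθ.le, mul_pow, mul_pow,
      Real.sq_sqrt hθ.le]
    ring
  simp only [kinetic, hpt, integral_const_mul,
    integral_comp_mul_left_of_pos (fun y => ‖deriv f y‖ ^ 2) hθ]
  field_simp

lemma potential_dilate (hθ : 0 < θ) (p : ℝ) (f : ℝ → ℂ) :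
    potential p (dilate θ f) = θ ^ ((p - 1) / 2) * potential p f := by
  have hpt : ∀ x, ‖dilate θ f x‖ ^ (p + 1) = θ ^ ((p + 1) / 2) * ‖f (θ * x)‖ ^ (p + 1) :=
    fun x => by
      rw [dilate, norm_mul, Complex.norm_real, Real.norm_of_nonneg (Real.sqrt_nonneg θ),
        Real.mul_rpow (Real.sqrt_nonneg θ) (norm_nonneg _), Real.sqrt_eq_rpow,
        ← Real.rpow_mul hθ.le]
      ring_nf
  simp only [potential, hpt, integral_const_mul,
    integral_comp_mul_left_of_pos (fun y => ‖f y‖ ^ (p + 1)) hθ, ← mul_assoc]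
  rw [← Real.rpow_neg_one, ← Real.rpow_add hθ]
  ring_nf

lemma interaction_dilate (hθ : 0 < θ) (u1 u2 u3 : ℝ → ℂ) :
    interaction (dilate θ u1) (dilate θ u2) (dilate θ u3) = √θ * interaction u1 u2 u3 := by
  have hpt : ∀ x, (dilate θ u1 x * dilate θ u2 x * (starRingEnd ℂ) (dilate θ u3 x)).re
      = θ * √θ * (u1 (θ * x) * u2 (θ * x) * (starRingEnd ℂ) (u3 (θ * x))).re := fun x => by
    have hθ' : ((√θ : ℝ) : ℂ) * √θ = θ := by
      rw [← Complex.ofReal_mul, Real.mul_self_sqrt hθ.le]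
    simp only [dilate, map_mul, Complex.conj_ofReal]
    rw [show (√θ : ℂ) * u1 (θ * x) * (√θ * u2 (θ * x)) * (√θ * (starRingEnd ℂ) (u3 (θ * x)))
        = ((θ * √θ : ℝ) : ℂ) * (u1 (θ * x) * u2 (θ * x) * (starRingEnd ℂ) (u3 (θ * x))) by
      push_cast; rw [← hθ']; ring, Complex.re_ofReal_mul]
  simp only [interaction, hpt, integral_const_mul,
    integral_comp_mul_left_of_pos (fun y => (u1 y * u2 y * (starRingEnd ℂ) (u3 y)).re) hθ]
  field_simp

end Dilation

noncomputable def gaussianProfile (c : ℝ) : ℝ → ℂ := fun x => ((c * Real.exp (-x ^ 2) : ℝ) : ℂ)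

lemma hasDerivAt_gaussianProfile (c x : ℝ) :
    HasDerivAt (gaussianProfile c) ((-(2 * c) * (x * Real.exp (-x ^ 2)) : ℝ) : ℂ) x := by
  have h := ((((hasDerivAt_pow 2 x).fun_neg).exp).const_mul c).ofReal_comp
  exact h.congr_deriv (by norm_num; ring)

lemma norm_gaussianProfile_sq (c x : ℝ) :
    ‖gaussianProfile c x‖ ^ 2 = c ^ 2 * Real.exp (-2 * x ^ 2) := by
  rw [gaussianProfile, Complex.norm_real, Real.norm_eq_abs, sq_abs, mul_pow, ← Real.exp_nat_mul]
  ring_nf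

lemma norm_deriv_gaussianProfile_sq (c x : ℝ) :
    ‖deriv (gaussianProfile c) x‖ ^ 2 = 4 * c ^ 2 * (x ^ (2 : ℝ) * Real.exp (-2 * x ^ 2)) := by
  rw [(hasDerivAt_gaussianProfile c x).deriv, Complex.norm_real, Real.norm_eq_abs, sq_abs,
    Real.rpow_two, mul_pow, mul_pow, ← Real.exp_nat_mul]
  ring_nf

lemma inH1_gaussianProfile (c : ℝ) : InH1 (gaussianProfile c) := by
  have hd : Differentiable ℝ (gaussianProfile c) := fun x =>
    (hasDerivAt_gaussianProfile c x).differentiableAt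
  refine ⟨?_, hd, ?_⟩
  · refine (memLp_two_iff_integrable_sq_norm hd.continuous.aestronglyMeasurable).mpr ?_
    simp only [norm_gaussianProfile_sq]
    exact (integrable_exp_neg_mul_sq two_pos).const_mul _
  · refine (memLp_two_iff_integrable_sq_norm (measurable_deriv _).aestronglyMeasurable).mpr ?_
    simp only [norm_deriv_gaussianProfile_sq]
    exact (integrable_rpow_mul_exp_neg_mul_sq two_pos (by norm_num)).const_mul _

lemma massSq_gaussianProfile (c : ℝ) : massSq (gaussianProfile c) = c ^ 2 * √(π / 2) := by
  simp only [massSq, norm_gaussianProfile_sq, integral_const_mul, integral_gaussian]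

lemma potential_gaussianProfile_pos {p c : ℝ} (hp : -1 < p) (hc : 0 < c) :
    0 < potential p (gaussianProfile c) := by
  have hpt : ∀ x, ‖gaussianProfile c x‖ ^ (p + 1) = c ^ (p + 1) * Real.exp (-(p + 1) * x ^ 2) :=
    fun x => by
      rw [gaussianProfile, Complex.norm_real, Real.norm_of_nonneg (by positivity),
        Real.mul_rpow hc.le (Real.exp_pos _).le, ← Real.exp_mul]
      ring_nf
  simp only [potential, hpt, integral_const_mul, integral_gaussian]
  have : 0 < π / (p + 1) := div_pos Real.pi_pos (by linarith)
  positivity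

lemma interaction_gaussianProfile_nonneg {c1 c2 c3 : ℝ} (h1 : 0 ≤ c1) (h2 : 0 ≤ c2)
    (h3 : 0 ≤ c3) :
    0 ≤ interaction (gaussianProfile c1) (gaussianProfile c2) (gaussianProfile c3) := by
  refine integral_nonneg fun x => ?_
  simp only [gaussianProfile, Complex.conj_ofReal, ← Complex.ofReal_mul, Complex.ofReal_re]
  positivity

lemma energy_dilate {θ : ℝ} (hθ : 0 < θ) (p α β : ℝ) (u1 u2 u3 : ℝ → ℂ) :
    energy p α β (dilate θ u1) (dilate θ u2) (dilate θ u3)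
      = θ ^ 2 * (1 / 2 * (kinetic u1 + kinetic u2 + kinetic u3))
        - θ ^ ((p - 1) / 2) * (β / (p + 1) * (potential p u1 + potential p u2 + potential p u3))
        - √θ * (α * interaction u1 u2 u3) := by
  simp only [energy, kinetic_dilate hθ, potential_dilate hθ, interaction_dilate hθ]
  ring

lemma exists_pos_mul_sq_lt_mul_rpow {A B b : ℝ} (hB : 0 < B) (hb : b < 2) :
    ∃ θ > 0, A * θ ^ 2 < B * θ ^ b := by
  have hlim : Tendsto (fun θ : ℝ => A * θ ^ (2 - b)) (𝓝[>] 0) (𝓝 0) := by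
    have := ((Real.continuousAt_rpow_const 0 (2 - b) (Or.inr (by linarith))).const_mul A).tendsto
    rw [Real.zero_rpow (by linarith), mul_zero] at this
    exact this.mono_left nhdsWithin_le_nhds
  obtain ⟨θ, hθB, hθ⟩ := ((hlim.eventually (gt_mem_nhds hB)).and self_mem_nhdsWithin).exists
  refine ⟨θ, hθ, ?_⟩
  have hsplit : θ ^ 2 = θ ^ (2 - b) * θ ^ b := by
    rw [← Real.rpow_add hθ, ← Real.rpow_natCast]; norm_num
  rw [hsplit, ← mul_assoc]
  exact mul_lt_mul_of_pos_right hθB (Real.rpow_pos_of_pos hθ b)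

lemma exists_neg_mem_constraintSet {p α β γ μ s : ℝ} (hp : -1 < p) (hp5 : p < 5) (hα : 0 ≤ α)
    (hβ : 0 < β) (hγ : 0 < γ) (hμ : 0 < μ) (hs : 0 < s) :
    ∃ e ∈ constraintSet p α β γ μ s, e < 0 := by
  have hc : ∀ m, 0 < m → 0 < √(m / √(π / 2)) ∧ massSq (gaussianProfile √(m / √(π / 2))) = m :=
    fun m hm => by
      have : 0 < √(π / 2) := by positivity
      refine ⟨by positivity, ?_⟩
      rw [massSq_gaussianProfile, Real.sq_sqrt (by positivity), div_mul_cancel₀ _ this.ne']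
  obtain ⟨hc1, hm1⟩ := hc γ hγ
  obtain ⟨hc2, hm2⟩ := hc μ hμ
  obtain ⟨hc3, hm3⟩ := hc s hs
  set u1 := gaussianProfile √(γ / √(π / 2))
  set u2 := gaussianProfile √(μ / √(π / 2))
  set u3 := gaussianProfile √(s / √(π / 2))
  have hP : 0 < β / (p + 1) * (potential p u1 + potential p u2 + potential p u3) := by
    have := potential_gaussianProfile_pos hp hc1
    have := potential_gaussianProfile_pos hp hc2
    have := potential_gaussianProfile_pos hp hc3
    have : 0 < p + 1 := by linarith
    positivity
  obtain ⟨θ, hθ, hlt⟩ := exists_pos_mul_sq_lt_mul_rpow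
    (A := 1 / 2 * (kinetic u1 + kinetic u2 + kinetic u3)) hP (by linarith : (p - 1) / 2 < 2)
  have hI := mul_nonneg (Real.sqrt_nonneg θ)
    (mul_nonneg hα (interaction_gaussianProfile_nonneg hc1.le hc2.le hc3.le))
  refine ⟨_, ⟨dilate θ u1, dilate θ u2, dilate θ u3,
    inH1_dilate hθ.ne' (inH1_gaussianProfile _), inH1_dilate hθ.ne' (inH1_gaussianProfile _),
    inH1_dilate hθ.ne' (inH1_gaussianProfile _), by rwa [massSq_dilate hθ],
    by rwa [massSq_dilate hθ], by rwa [massSq_dilate hθ], rfl⟩, ?_⟩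
  rw [energy_dilate hθ]
  linarith

theorem finite_and_negative_infimum
    (p α β γ μ s : ℝ) (hp : 1 < p) (hp5 : p < 5) (hα : 0 < α) (hβ : 0 < β)
    (hγ : 0 < γ) (hμ : 0 < μ) (hs : 0 < s) :
    BddBelow (constraintSet p α β γ μ s) ∧ Iinf p α β γ μ s < 0 := by
  have hbdd := bddBelow_constraintSet hp.le hp5 hβ.le α γ μ s
  obtain ⟨e, he, hneg⟩ :=
    exists_neg_mem_constraintSet (by linarith) hp5 hα.le hβ hγ hμ hs
  exact ⟨hbdd, (csInf_le hbdd he).trans_lt hneg⟩
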